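/- arXiv:2604.23292 — 5 statements merged into one kernel-verified Lean document; each statement's English description precedes it below -/
import Mathlib

section
/- Let 𝒜 be a real *-subalgebra of M_n(ℂ) and let Π be the orthogonal projection of M_n(ℂ) onto 𝒜 with respect to the real Hilbert–Schmidt inner product. Then (i) Π is positive: Π(B) is positive semidefinite whenever B is positive semidefinite; (ii) Π is real completely positive: for all finite families A_1,…,A_k ∈ 𝒜 and B_1,…,B_k ∈ M_n(ℂ), the matrix ∑_{i,j} A_iᴴ · Π(B_iᴴ B_j) · A_j is positive semidefinite; and (iii) Π is faithful: if B is positive semidefinite and Π(B) = 0, then B = 0. -/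
/-!
Orthogonality determines `Π(M)` uniquely inside `𝒜`, so `Π` commutes with `ᴴ` and with
two-sided multiplication by elements of `𝒜`. For positivity, `H = Π(B)` is Hermitian and its
negative part `H⁻` lies in `𝒜`; testing orthogonality against `H⁻` gives
`0 ≤ Re Tr(H⁻ B) = Re Tr(H⁻ H) = -Re Tr(H⁻ᴴ H⁻)`, hence `H⁻ = 0`. Complete positivity reduces
to positivity because `∑ A_iᴴ Π(B_iᴴ B_j) A_j = Π(Xᴴ X)` with `X = ∑ B_i A_i`, and faithfulness
is orthogonality against `I`: `Re Tr B = Re Tr Π(B) = 0`.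
-/

open Matrix Complex Filter
open scoped ComplexOrder

/-- `Mat n` is the algebra of `n × n` complex matrices. -/
abbrev Mat (n : ℕ) := Matrix (Fin n) (Fin n) ℂ

/-- A real `*`-subalgebra of `M_n(ℂ)`: a real-linear subspace containing the identity,
closed under matrix multiplication and conjugate transpose. -/
def IsRealStarSubalgebra {n : ℕ} (𝒜 : Set (Mat n)) : Prop :=
  (∀ A ∈ 𝒜, ∀ B ∈ 𝒜, A + B ∈ 𝒜) ∧
  (∀ (r : ℝ), ∀ A ∈ 𝒜, r • A ∈ 𝒜) ∧
  (∀ A ∈ 𝒜, ∀ B ∈ 𝒜, A * B ∈ 𝒜) ∧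
  (∀ A ∈ 𝒜, Aᴴ ∈ 𝒜) ∧
  (1 : Mat n) ∈ 𝒜

/-- A real positive map: a real-linear map sending positive semidefinite matrices
to positive semidefinite matrices. -/
def IsRealPositiveMap {n : ℕ} (α : Mat n →ₗ[ℝ] Mat n) : Prop :=
  ∀ B : Mat n, B.PosSemidef → (α B).PosSemidef

/-- A real conditional expectation onto `𝒜`: a real positive map with range in `𝒜`
satisfying the module property `α(AB) = A·α(B)` for `A ∈ 𝒜`. -/
def IsRealCondExp {n : ℕ} (𝒜 : Set (Mat n)) (α : Mat n →ₗ[ℝ] Mat n) : Prop :=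
  IsRealPositiveMap α ∧ (∀ B : Mat n, α B ∈ 𝒜) ∧
  (∀ A ∈ 𝒜, ∀ B : Mat n, α (A * B) = A * α B)

open scoped MatrixOrder

namespace Matrix

variable {ι : Type*} [Fintype ι]

lemma PosSemidef.re_trace_eq_zero_iff {A : Matrix ι ι ℂ} (hA : A.PosSemidef) :
    A.trace.re = 0 ↔ A = 0 := by
  rw [← hA.trace_eq_zero_iff, Complex.ext_iff, ← (Complex.nonneg_iff.mp hA.trace_nonneg).2]
  simp

lemma PosSemidef.trace_mul_nonneg [DecidableEq ι] {A B : Matrix ι ι ℂ} (hA : A.PosSemidef)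
    (hB : B.PosSemidef) : 0 ≤ (A * B).trace := by
  have hS := CFC.sqrt_nonneg A
  rw [← CFC.sqrt_mul_sqrt_self A hA.nonneg, trace_mul_cycle, ← trace_mul_comm]
  simpa [mul_assoc, hS.posSemidef.isHermitian.eq] using
    (hB.conjTranspose_mul_mul_same (CFC.sqrt A)).trace_nonneg

lemma sum_conjTranspose_mul_mul {k : Type*} [Fintype k] (A B : k → Matrix ι ι ℂ) :
    ∑ i, ∑ j, (A i)ᴴ * ((B i)ᴴ * B j) * A j = (∑ i, B i * A i)ᴴ * ∑ i, B i * A i := by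
  simp only [conjTranspose_sum, conjTranspose_mul, Finset.sum_mul, Finset.mul_sum, mul_assoc]
  exact Finset.sum_comm

lemma isClosed_starSubalgebra [DecidableEq ι] (S : StarSubalgebra ℝ (Matrix ι ι ℂ)) :
    IsClosed (S : Set (Matrix ι ι ℂ)) :=
  Submodule.closed_of_finiteDimensional S.toSubalgebra.toSubmodule

end Matrix

def IsRealStarSubalgebra.toStarSubalgebra {n : ℕ} {𝒜 : Set (Mat n)}
    (h𝒜 : IsRealStarSubalgebra 𝒜) : StarSubalgebra ℝ (Mat n) where
  carrier := 𝒜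
  add_mem' ha hb := h𝒜.1 _ ha _ hb
  mul_mem' ha hb := h𝒜.2.2.1 _ ha _ hb
  algebraMap_mem' r := by
    simpa [Algebra.algebraMap_eq_smul_one] using h𝒜.2.1 r 1 h𝒜.2.2.2.2
  star_mem' ha := h𝒜.2.2.2.1 _ ha

structure IsOrthogonalProjection {ι : Type*} [Fintype ι] [DecidableEq ι]
    (S : StarSubalgebra ℝ (Matrix ι ι ℂ)) (P : Matrix ι ι ℂ → Matrix ι ι ℂ) : Prop where
  mem : ∀ B, P B ∈ S
  orthogonal : ∀ A ∈ S, ∀ B, ((Aᴴ * (B - P B)).trace).re = 0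

namespace IsOrthogonalProjection

variable {ι : Type*} [Fintype ι] [DecidableEq ι] {S : StarSubalgebra ℝ (Matrix ι ι ℂ)}

section

variable {P : Matrix ι ι ℂ → Matrix ι ι ℂ} (hP : IsOrthogonalProjection S P)
include hP

lemma eq_of_orthogonal {M X : Matrix ι ι ℂ} (hX : X ∈ S)
    (hMX : ∀ A ∈ S, ((Aᴴ * (M - X)).trace).re = 0) : P M = X := by
  set C := X - P M
  have hC : C ∈ S := S.sub_mem hX (hP.mem M)
  have hCC : Cᴴ * C = Cᴴ * (M - P M) - Cᴴ * (M - X) := by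
    rw [← mul_sub, sub_sub_sub_cancel_left]
  have : ((Cᴴ * C).trace).re = 0 := by
    rw [hCC, trace_sub, Complex.sub_re, hP.orthogonal C hC, hMX C hC, sub_zero]
  rw [(posSemidef_conjTranspose_mul_self C).re_trace_eq_zero_iff,
    conjTranspose_mul_self_eq_zero, sub_eq_zero] at this
  exact this.symm

lemma map_conjTranspose (M : Matrix ι ι ℂ) : P Mᴴ = (P M)ᴴ := by
  refine hP.eq_of_orthogonal (star_mem (hP.mem M)) fun A hA => ?_
  rw [← conjTranspose_sub, ← conjTranspose_mul, trace_conjTranspose, Complex.star_def,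
    Complex.conj_re, trace_mul_comm, ← conjTranspose_conjTranspose A]
  exact hP.orthogonal _ (star_mem hA) M

lemma map_mul_mul {A A' : Matrix ι ι ℂ} (hA : A ∈ S) (hA' : A' ∈ S) (M : Matrix ι ι ℂ) :
    P (A * M * A') = A * P M * A' := by
  refine hP.eq_of_orthogonal (mul_mem (mul_mem hA (hP.mem M)) hA') fun C hC => ?_
  have := hP.orthogonal _ (mul_mem (mul_mem (star_mem hA) hC) (star_mem hA')) M
  rw [star_eq_conjTranspose, star_eq_conjTranspose, conjTranspose_mul, conjTranspose_mul,
    conjTranspose_conjTranspose, conjTranspose_conjTranspose, mul_assoc, trace_mul_comm] at this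
  rw [← sub_mul, ← mul_sub]
  simpa only [mul_assoc] using this

lemma posSemidef {B : Matrix ι ι ℂ} (hB : B.PosSemidef) : (P B).PosSemidef := by
  set H := P B
  have hH : IsSelfAdjoint H := by
    rw [IsSelfAdjoint, star_eq_conjTranspose, ← hP.map_conjTranspose, hB.isHermitian.eq]
  have hN : H⁻.PosSemidef := (CFC.negPart_nonneg H).posSemidef
  -- A finite-dimensional star subalgebra is closed, hence stable under the functional calculus.
  have hNS : H⁻ ∈ S := by
    have := isClosed_starSubalgebra S
    exact cfcₙ_mem _ (hP.mem B)
  have hNH : H⁻ * H = -(H⁻ᴴ * H⁻) := by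
    calc H⁻ * H = H⁻ * H⁺ - H⁻ * H⁻ := by rw [← mul_sub, CFC.posPart_sub_negPart H]
      _ = -(H⁻ᴴ * H⁻) := by rw [CFC.negPart_mul_posPart, zero_sub, hN.isHermitian.eq]
  have horth := hP.orthogonal _ hNS B
  rw [hN.isHermitian.eq, mul_sub, trace_sub, Complex.sub_re, hNH, trace_neg, Complex.neg_re,
    sub_neg_eq_add] at horth
  have hNN : ((H⁻ᴴ * H⁻).trace).re = 0 := by
    have h1 := (Complex.nonneg_iff.mp (hN.trace_mul_nonneg hB)).1
    have h2 := (Complex.nonneg_iff.mp (posSemidef_conjTranspose_mul_self H⁻).trace_nonneg).1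
    linarith
  rw [(posSemidef_conjTranspose_mul_self _).re_trace_eq_zero_iff, conjTranspose_mul_self_eq_zero,
    CFC.negPart_eq_zero_iff H] at hNN
  exact hNN.posSemidef

lemma eq_zero_of_map_eq_zero {B : Matrix ι ι ℂ} (hB : B.PosSemidef) (hPB : P B = 0) : B = 0 := by
  have := hP.orthogonal 1 S.one_mem B
  rwa [hPB, conjTranspose_one, one_mul, sub_zero, hB.re_trace_eq_zero_iff] at this

end

lemma posSemidef_sum_conjTranspose_mul_map_mul {k : Type*} [Fintype k]
    {P : Matrix ι ι ℂ →ₗ[ℝ] Matrix ι ι ℂ} (hP : IsOrthogonalProjection S P)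
    {A : k → Matrix ι ι ℂ} (hA : ∀ i, A i ∈ S) (B : k → Matrix ι ι ℂ) :
    (∑ i, ∑ j, (A i)ᴴ * P ((B i)ᴴ * B j) * A j).PosSemidef := by
  have hmod : ∀ i j, (A i)ᴴ * P ((B i)ᴴ * B j) * A j = P ((A i)ᴴ * ((B i)ᴴ * B j) * A j) :=
    fun i j => (hP.map_mul_mul (star_mem (hA i)) (hA j) _).symm
  simp_rw [hmod, ← map_sum, sum_conjTranspose_mul_mul]
  exact hP.posSemidef (posSemidef_conjTranspose_mul_self _)

end IsOrthogonalProjection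

/-- The orthogonal projection onto a real `*`-subalgebra with respect to
the real Hilbert–Schmidt inner product is (i) positive, (ii) real completely positive,
and (iii) faithful. -/
theorem stmt2 {n : ℕ} (𝒜 : Set (Mat n)) (h𝒜 : IsRealStarSubalgebra 𝒜)
    (P : Mat n →ₗ[ℝ] Mat n)
    (hPmem : ∀ B : Mat n, P B ∈ 𝒜)
    (hPorth : ∀ A ∈ 𝒜, ∀ B : Mat n, ((Aᴴ * (B - P B)).trace).re = 0) :
    (∀ B : Mat n, B.PosSemidef → (P B).PosSemidef) ∧
    (∀ (k : ℕ) (A B : Fin k → Mat n), (∀ i, A i ∈ 𝒜) →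
      (∑ i, ∑ j, (A i)ᴴ * P ((B i)ᴴ * B j) * (A j)).PosSemidef) ∧
    (∀ B : Mat n, B.PosSemidef → P B = 0 → B = 0) := by
  have hP : IsOrthogonalProjection h𝒜.toStarSubalgebra P := ⟨hPmem, hPorth⟩
  exact ⟨fun B hB => hP.posSemidef hB,
    fun k A B hA => hP.posSemidef_sum_conjTranspose_mul_map_mul hA B,
    fun B hB hPB => hP.eq_zero_of_map_eq_zero hB hPB⟩
end

section
/- Let α : M_n(ℂ) → M_n(ℂ) be a real positive map with α(I) = I that is faithful (if B is positive semidefinite and α(B) = 0 then B = 0) and idempotent (α ∘ α = α). Let 𝒜_J := { A ∈ M_n(ℂ) : A Hermitian and α(A) = A } be the set of Hermitian fixed points of α. Then: (i) 𝒜_J is closed under the Jordan product, i.e. if A, B ∈ 𝒜_J then A∘B := (AB + BA)/2 ∈ 𝒜_J; (ii) for every A ∈ 𝒜_J and every Hermitian B ∈ M_n(ℂ), α(A∘B) = A∘α(B); and (iii) for every A ∈ 𝒜_J and every Hermitian B ∈ M_n(ℂ), α(ABA) = A·α(B)·A. -/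
open Matrix Complex Filter
open scoped ComplexOrder

section Algebra

variable {R : Type*} [Ring R] [Algebra ℝ R]

theorem sum_sub_mul_mul_sub_eq {ι : Type*} [Fintype ι] (Q : ι → R) (hsum : ∑ i, Q i = 1)
    (c : ι → ℝ) :
    ∑ i, (c i • 1 - ∑ j, c j • Q j) * Q i * (c i • 1 - ∑ j, c j • Q j) =
      ∑ i, c i ^ 2 • Q i - (∑ i, c i • Q i) * (∑ i, c i • Q i) := by
  set X := ∑ j, c j • Q j
  have expand : ∀ i, (c i • 1 - X) * Q i * (c i • 1 - X) =
      c i ^ 2 • Q i - c i • Q i * X - X * (c i • Q i) + X * Q i * X := fun i => by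
    simp only [sub_mul, mul_sub, smul_mul_assoc, mul_smul_comm, one_mul, mul_one]
    module
  simp only [expand, Finset.sum_add_distrib, Finset.sum_sub_distrib, ← Finset.sum_mul,
    ← Finset.mul_sum, hsum, mul_one]
  abel

theorem mul_mul_eq_smul_jordan (A B : R) :
    A * B * A = (2⁻¹ : ℝ) •
      (A * (A * B + B * A) + (A * B + B * A) * A - (A * A * B + B * (A * A))) := by
  simp only [mul_add, add_mul, ← mul_assoc]
  module

end Algebra

theorem eq_zero_of_forall_mul_add_sq_mul_nonneg {b a : ℝ} (h : ∀ t : ℝ, 0 ≤ t * b + t ^ 2 * a) :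
    b = 0 := by
  have hdiscrim := discrim_le_zero (a := a) (b := b) (c := 0) fun t => by linarith [h t, sq t]
  rw [discrim] at hdiscrim
  nlinarith [sq_nonneg b]

namespace Matrix

variable {𝕜 : Type*} [RCLike 𝕜] {m p : Type*} [Fintype m] [Fintype p]

theorem IsHermitian.eq_zero_of_forall_dotProduct_mulVec_eq_zero {D : Matrix m m 𝕜}
    (hD : D.IsHermitian) (h : ∀ v, star v ⬝ᵥ D *ᵥ v = 0) : D = 0 := by
  have hpsd : D.PosSemidef := .of_dotProduct_mulVec_nonneg hD fun v => (h v).ge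
  exact mulVec_injective <| funext fun v => by
    rw [(hpsd.dotProduct_mulVec_zero_iff v).1 (h v), zero_mulVec]

theorem eq_zero_of_forall_posSemidef_smul_add_sq_smul {D E : Matrix m m 𝕜}
    (hE : E.IsHermitian) (h : ∀ t : ℝ, (t • D + t ^ 2 • E).PosSemidef) : D = 0 := by
  have hD : D.IsHermitian := by simpa using (h 1).isHermitian.sub hE
  refine hD.eq_zero_of_forall_dotProduct_mulVec_eq_zero fun v => RCLike.ext ?_ ?_
  · rw [map_zero]
    refine eq_zero_of_forall_mul_add_sq_mul_nonneg (a := RCLike.re (star v ⬝ᵥ E *ᵥ v)) fun t => ?_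
    have hquad := (RCLike.nonneg_iff.1 ((h t).dotProduct_mulVec_nonneg v)).1
    simpa [add_mulVec, smul_mulVec, dotProduct_smul, RCLike.smul_re] using hquad
  · simpa using hD.im_star_dotProduct_mulVec_self v

theorem IsHermitian.mul_add_mul {A B : Matrix m m 𝕜} (hA : A.IsHermitian) (hB : B.IsHermitian) :
    (A * B + B * A).IsHermitian := by
  rw [IsHermitian, conjTranspose_add, conjTranspose_mul, conjTranspose_mul, hA.eq, hB.eq, add_comm]

variable [DecidableEq m] [DecidableEq p]

theorem IsHermitian.exists_spectral_resolution {C : Matrix m m 𝕜} (hC : C.IsHermitian) :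
    ∃ (P : m → Matrix m m 𝕜) (c : m → ℝ), (∀ i, (P i).PosSemidef) ∧ ∑ i, P i = 1 ∧
      ∑ i, c i • P i = C ∧ ∑ i, c i ^ 2 • P i = C * C := by
  set U := hC.eigenvectorUnitary
  set c := hC.eigenvalues
  have hspec : Unitary.conjStarAlgAut 𝕜 _ U (diagonal (RCLike.ofReal ∘ c)) = C :=
    hC.spectral_theorem.symm
  clear_value U c
  set φ := Unitary.conjStarAlgAut 𝕜 _ U
  have hφ : ∀ g : m → ℝ,
      ∑ i, g i • φ (diagonal (Pi.single i 1)) = φ (diagonal (RCLike.ofReal ∘ g)) := by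
    intro g
    simp only [RCLike.real_smul_eq_coe_smul (K := 𝕜), ← map_smul, ← map_sum]
    congr 1
    ext j k
    by_cases hjk : j = k <;>
      simp [Matrix.sum_apply, Pi.single_apply, RCLike.real_smul_eq_coe_mul, hjk]
  refine ⟨fun i => φ (diagonal (Pi.single i 1)), c, fun i => ?_, ?_, ?_, ?_⟩
  · exact (PosSemidef.diagonal (Pi.single_nonneg.2 zero_le_one)).mul_mul_conjTranspose_same _
  · simpa using hφ 1
  · rw [hφ, hspec]
  · rw [hφ, ← hspec, ← map_mul, diagonal_mul_diagonal]
    simp [sq]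

theorem posSemidef_sum_sq_smul_sub_mul_self {ι : Type*} [Fintype ι] (Q : ι → Matrix p p 𝕜)
    (hQ : ∀ i, (Q i).PosSemidef) (hsum : ∑ i, Q i = 1) (c : ι → ℝ) :
    (∑ i, c i ^ 2 • Q i - (∑ i, c i • Q i) * (∑ i, c i • Q i)).PosSemidef := by
  rw [← sum_sub_mul_mul_sub_eq Q hsum c]
  refine posSemidef_sum _ fun i _ => ?_
  have hX : (c i • 1 - ∑ j, c j • Q j).IsHermitian :=
    (isHermitian_one.smul (.all _)).sub <|
      isSelfAdjoint_sum _ fun j _ => (hQ j).isHermitian.smul (.all _)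
  have h := (hQ i).conjTranspose_mul_mul_same (c i • 1 - ∑ j, c j • Q j)
  rwa [hX.eq] at h

theorem kadison_schwarz (α : Matrix m m 𝕜 →ₗ[ℝ] Matrix p p 𝕜)
    (hpos : ∀ B, B.PosSemidef → (α B).PosSemidef) (hunital : α 1 = 1)
    {C : Matrix m m 𝕜} (hC : C.IsHermitian) : (α (C * C) - α C * α C).PosSemidef := by
  obtain ⟨P, c, hP, hsum, hC₁, hC₂⟩ := hC.exists_spectral_resolution
  rw [← hC₂, ← hC₁]
  simp only [map_sum, map_smul]
  exact posSemidef_sum_sq_smul_sub_mul_self _ (fun i => hpos _ (hP i))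
    (by rw [← map_sum, hsum, hunital]) c

theorem map_mul_add_mul_eq_of_map_mul_self (α : Matrix m m 𝕜 →ₗ[ℝ] Matrix p p 𝕜)
    (hpos : ∀ B, B.PosSemidef → (α B).PosSemidef) (hunital : α 1 = 1)
    {A B : Matrix m m 𝕜} (hA : A.IsHermitian) (hB : B.IsHermitian)
    (hA₂ : α (A * A) = α A * α A) :
    α (A * B + B * A) = α A * α B + α B * α A := by
  have hquad : ∀ t : ℝ, (t • (α (A * B + B * A) - (α A * α B + α B * α A)) +
      t ^ 2 • (α (B * B) - α B * α B)).PosSemidef := fun t => by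
    have hAtB : (A + t • B).IsHermitian := hA.add (hB.smul (.all t))
    convert kadison_schwarz α hpos hunital hAtB using 1
    simp only [map_add, map_smul, add_mul, mul_add, smul_mul_assoc, mul_smul_comm, hA₂]
    module
  exact sub_eq_zero.1 <| eq_zero_of_forall_posSemidef_smul_add_sq_smul
    (kadison_schwarz α hpos hunital hB).isHermitian hquad

theorem map_mul_self_eq_of_map_eq (α : Matrix m m 𝕜 →ₗ[ℝ] Matrix m m 𝕜)
    (hpos : ∀ B, B.PosSemidef → (α B).PosSemidef) (hunital : α 1 = 1)
    (hfaithful : ∀ B, B.PosSemidef → α B = 0 → B = 0) (hidem : ∀ B, α (α B) = α B)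
    {A : Matrix m m 𝕜} (hA : A.IsHermitian) (hfix : α A = A) : α (A * A) = A * A := by
  have hkad := kadison_schwarz α hpos hunital hA
  rw [hfix] at hkad
  refine sub_eq_zero.1 (hfaithful _ hkad ?_)
  rw [map_sub, hidem, sub_self]

theorem map_mul_mul_eq_of_jordan (α : Matrix m m 𝕜 →ₗ[ℝ] Matrix m m 𝕜)
    {A B : Matrix m m 𝕜} (hA : A.IsHermitian) (hB : B.IsHermitian)
    (hjordan : ∀ X, X.IsHermitian → α (A * X + X * A) = A * α X + α X * A)
    (hjordan_sq : α (A * A * B + B * (A * A)) = A * A * α B + α B * (A * A)) :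
    α (A * B * A) = A * α B * A := by
  rw [mul_mul_eq_smul_jordan, map_smul, map_sub, hjordan _ (hA.mul_add_mul hB), hjordan_sq,
    hjordan B hB, ← mul_mul_eq_smul_jordan]

end Matrix

/-- Let `α` be a unital real positive map that is faithful and idempotent,
and let `𝒜_J` be its set of Hermitian fixed points. Then `𝒜_J` is closed under the Jordan
product, `α` is a Jordan conditional expectation onto `𝒜_J`
(`α(A∘B) = A∘α(B)`), and `α(ABA) = A·α(B)·A` for `A ∈ 𝒜_J` and Hermitian `B`. -/
theorem stmt7 {n : ℕ} (α : Mat n →ₗ[ℝ] Mat n)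
    (hpos : IsRealPositiveMap α) (hunital : α 1 = 1)
    (hfaithful : ∀ B : Mat n, B.PosSemidef → α B = 0 → B = 0)
    (hidem : ∀ B : Mat n, α (α B) = α B) :
    (∀ A : Mat n, A.IsHermitian → α A = A → ∀ B : Mat n, B.IsHermitian → α B = B →
      α ((2⁻¹ : ℂ) • (A * B + B * A)) = (2⁻¹ : ℂ) • (A * B + B * A)) ∧
    (∀ A : Mat n, A.IsHermitian → α A = A → ∀ B : Mat n, B.IsHermitian →
      α ((2⁻¹ : ℂ) • (A * B + B * A)) = (2⁻¹ : ℂ) • (A * α B + α B * A)) ∧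
    (∀ A : Mat n, A.IsHermitian → α A = A → ∀ B : Mat n, B.IsHermitian →
      α (A * B * A) = A * α B * A) := by
  have hsq : ∀ A : Mat n, A.IsHermitian → α A = A → α (A * A) = A * A :=
    fun A hA hfix => map_mul_self_eq_of_map_eq α hpos hunital hfaithful hidem hA hfix
  have hjordan : ∀ A : Mat n, A.IsHermitian → α A = A → ∀ B : Mat n, B.IsHermitian →
      α (A * B + B * A) = A * α B + α B * A := fun A hA hfix B hB => by
    rw [map_mul_add_mul_eq_of_map_mul_self α hpos hunital hA hB (by rw [hsq A hA hfix, hfix]),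
      hfix]
  have hhalf : ∀ M : Mat n, α ((2⁻¹ : ℂ) • M) = (2⁻¹ : ℂ) • α M := fun M => by
    rw [show (2⁻¹ : ℂ) = ((2⁻¹ : ℝ) : ℂ) by norm_num, Complex.coe_smul, Complex.coe_smul,
      map_smul]
  refine ⟨fun A hA hfix B hB hfixB => ?_, fun A hA hfix B hB => ?_, fun A hA hfix B hB => ?_⟩
  · rw [hhalf, hjordan A hA hfix B hB, hfixB]
  · rw [hhalf, hjordan A hA hfix B hB]
  · have hA₂ : (A * A).IsHermitian := pow_two A ▸ hA.pow 2
    exact map_mul_mul_eq_of_jordan α hA hB (hjordan A hA hfix)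
      (hjordan (A * A) hA₂ (hsq A hA hfix) B hB)
end

section
/- Let A be a real m×m matrix such that: (a) there is a constant C with ‖Aⁿ‖ ≤ C for all natural numbers n, and (b) every complex eigenvalue λ of A (i.e. every λ in the spectrum of A viewed as a complex matrix via the coercion ℝ → ℂ) satisfies |λ| ≤ 1, with λ = 1 being the only eigenvalue of modulus one. Then the limit P = lim_{n→∞} Aⁿ exists, and P is the projection onto the fixed-point subspace of A: P·P = P, A·P = P = P·A, and for every vector v one has P v = v if and only if A v = v. -/
/-!
Bounded powers rule out a Jordan block for the eigenvalue `1`: if `A u - u = w` with `A w = w`,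
then `Aⁿ u = u + n w`. Hence `ker (A - 1)` and `range (A - 1)` are complementary, and the
projection `Q` onto the first along the second satisfies `A Q = Q A = Q = Q²`, so that
`Aⁿ⁺¹ = Q + (A - Q)ⁿ⁺¹`. A nonzero eigenvalue of `A - Q` is an eigenvalue of `A` different
from `1`, hence of modulus `< 1`, and Gelfand's formula gives `(A - Q)ⁿ → 0`.
-/

open Matrix Complex Filter Topology

section TopologicalMonoid

variable {M : Type*} [Monoid M] [TopologicalSpace M] [ContinuousMul M] [T2Space M] {a p : M}

theorem mul_eq_right_of_tendsto_pow (h : Tendsto (a ^ ·) atTop (𝓝 p)) : a * p = p :=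
  tendsto_nhds_unique (h.const_mul a) <| by
    simpa only [pow_succ'] using (tendsto_add_atTop_iff_nat 1).2 h

theorem mul_eq_left_of_tendsto_pow (h : Tendsto (a ^ ·) atTop (𝓝 p)) : p * a = p :=
  tendsto_nhds_unique (h.mul_const a) <| by
    simpa only [pow_succ] using (tendsto_add_atTop_iff_nat 1).2 h

theorem isIdempotentElem_of_tendsto_pow (h : Tendsto (a ^ ·) atTop (𝓝 p)) :
    IsIdempotentElem p :=
  tendsto_nhds_unique (h.mul h) <| by
    simpa only [Function.comp_def, id, pow_add] using
      h.comp (tendsto_id.atTop_add_atTop tendsto_id)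

end TopologicalMonoid

theorem pow_succ_eq_sub_pow_succ_add {R : Type*} [Ring R] {b q : R} (hbq : b * q = q)
    (hqb : q * b = q) (hq : IsIdempotentElem q) (n : ℕ) :
    b ^ (n + 1) = (b - q) ^ (n + 1) + q := by
  induction n with
  | zero => simp
  | succ n ih =>
    have hqc : q * (b - q) ^ (n + 1) = 0 := by
      rw [pow_succ', ← mul_assoc, mul_sub, hqb, hq.eq, sub_self, zero_mul]
    rw [pow_succ' b, ih, mul_add, hbq, pow_succ' (b - q) (n + 1), sub_mul, hqc, sub_zero]

section BanachAlgebra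

variable {𝒜 : Type*} [NormedRing 𝒜] [NormedAlgebra ℂ 𝒜] [CompleteSpace 𝒜]

theorem tendsto_pow_atTop_nhds_zero_of_spectralRadius_lt_one {a : 𝒜}
    (h : spectralRadius ℂ a < 1) : Tendsto (a ^ ·) atTop (𝓝 0) := by
  obtain ⟨r, hρr, hr1⟩ := ENNReal.lt_iff_exists_nnreal_btwn.1 h
  have hbound : ∀ᶠ n : ℕ in atTop, ‖a ^ n‖₊ ≤ r ^ n := by
    filter_upwards [(spectrum.gelfand_formula a).eventually_lt_const hρr,
      eventually_ne_atTop 0] with n hn hn0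
    rw [one_div, ← ENNReal.coe_rpow_of_nonneg _ (by positivity), ENNReal.coe_lt_coe,
      NNReal.rpow_inv_lt_iff (by positivity), NNReal.rpow_natCast] at hn
    exact hn.le
  refine squeeze_zero_norm' (hbound.mono fun n hn => ?_)
    (tendsto_pow_atTop_nhds_zero_of_lt_one r.coe_nonneg (by exact_mod_cast hr1))
  exact_mod_cast hn

theorem tendsto_pow_atTop_nhds_zero_of_forall_spectrum_norm_lt_one {a : 𝒜}
    (h : ∀ z ∈ spectrum ℂ a, ‖z‖ < 1) : Tendsto (a ^ ·) atTop (𝓝 0) := by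
  cases subsingleton_or_nontrivial 𝒜
  · simpa only [Subsingleton.elim _ (0 : 𝒜)] using tendsto_const_nhds
  refine tendsto_pow_atTop_nhds_zero_of_spectralRadius_lt_one ?_
  exact_mod_cast spectrum.spectralRadius_lt_of_forall_lt a fun z hz => by
    exact_mod_cast h z hz

theorem tendsto_pow_atTop_nhds_of_isIdempotentElem {b q : 𝒜} (hbq : b * q = q)
    (hqb : q * b = q) (hq : IsIdempotentElem q) (h : ∀ z ∈ spectrum ℂ (b - q), ‖z‖ < 1) :
    Tendsto (b ^ ·) atTop (𝓝 q) := by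
  rw [← tendsto_add_atTop_iff_nat 1]
  simp_rw [pow_succ_eq_sub_pow_succ_add hbq hqb hq]
  simpa using ((tendsto_pow_atTop_nhds_zero_of_forall_spectrum_norm_lt_one h).comp
    (tendsto_add_atTop_nat 1)).add_const q

end BanachAlgebra

namespace Module.End

theorem pow_apply_eq_add_nsmul_of_sub_one_apply {R M : Type*} [Ring R] [AddCommGroup M]
    [Module R M] {f : End R M} {u w : M} (hw : (f - 1) w = 0) (hu : (f - 1) u = w) (n : ℕ) :
    (f ^ n) u = u + n • w := by
  induction n with
  | zero => simp
  | succ n ih =>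
    have hfw : f w = w := by simpa [sub_eq_zero] using hw
    have hfu : f u = u + w := by simp [← hu]
    rw [pow_succ', mul_apply, ih, map_add, map_nsmul, hfu, hfw, succ_nsmul]
    abel

theorem disjoint_ker_sub_one_range_sub_one_of_bounded {𝕜 E : Type*} [RCLike 𝕜]
    [NormedAddCommGroup E] [NormedSpace 𝕜 E] (f : End 𝕜 E)
    (hf : ∀ v, ∃ C, ∀ n, ‖(f ^ n) v‖ ≤ C) :
    Disjoint (LinearMap.ker (f - 1)) (LinearMap.range (f - 1)) := by
  refine Submodule.disjoint_def.2 fun w hw ⟨u, hu⟩ => ?_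
  obtain ⟨C, hC⟩ := hf u
  have hlin (n : ℕ) : n * ‖w‖ ≤ C + ‖u‖ :=
    calc n * ‖w‖ = ‖(f ^ n) u - u‖ := by
          rw [pow_apply_eq_add_nsmul_of_sub_one_apply hw hu, add_sub_cancel_left,
            RCLike.norm_nsmul 𝕜, nsmul_eq_mul]
      _ ≤ ‖(f ^ n) u‖ + ‖u‖ := norm_sub_le _ _
      _ ≤ C + ‖u‖ := by grw [hC n]
  by_contra hw0
  obtain ⟨n, hn⟩ := exists_nat_gt ((C + ‖u‖) / ‖w‖)
  rw [div_lt_iff₀ (norm_pos_iff.2 hw0)] at hn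
  linarith [hlin n]

theorem isCompl_ker_range_of_disjoint {K V : Type*} [Field K] [AddCommGroup V] [Module K V]
    [FiniteDimensional K V] {g : End K V}
    (h : Disjoint (LinearMap.ker g) (LinearMap.range g)) :
    IsCompl (LinearMap.ker g) (LinearMap.range g) :=
  (Submodule.isCompl_iff_disjoint _ _
    (by rw [add_comm, LinearMap.finrank_range_add_finrank_ker])).2 h

variable {K V : Type*} [Field K] [AddCommGroup V] [Module K V] {f : End K V}
  (hc : IsCompl (LinearMap.ker (f - 1)) (LinearMap.range (f - 1)))

noncomputable def fixedProj : End K V :=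
  (LinearMap.ker (f - 1)).projection (LinearMap.range (f - 1)) hc

theorem mul_fixedProj : f * fixedProj hc = fixedProj hc := by
  ext v
  have : fixedProj hc v ∈ LinearMap.ker (f - 1) := Submodule.projection_apply_mem hc v
  simpa [sub_eq_zero] using this

theorem fixedProj_mul : fixedProj hc * f = fixedProj hc := by
  ext v
  have : fixedProj hc ((f - 1) v) = 0 :=
    (Submodule.projection_apply_eq_zero_iff hc).2 (LinearMap.mem_range_self _ v)
  simpa [sub_eq_zero] using this

theorem isIdempotentElem_fixedProj : IsIdempotentElem (fixedProj hc) :=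
  Submodule.isIdempotentElem_projection hc

theorem mem_spectrum_of_mem_spectrum_sub_fixedProj [FiniteDimensional K V] {μ : K}
    (hμ : μ ∈ spectrum K (f - fixedProj hc)) (hμ0 : μ ≠ 0) :
    μ ∈ spectrum K f ∧ μ ≠ 1 := by
  set P := fixedProj hc
  obtain ⟨v, hv⟩ := (hasEigenvalue_iff_mem_spectrum.2 hμ).exists_hasEigenvector
  have hv' : f v - P v = μ • v := mem_eigenspace_iff.1 hv.1
  have hPv : P v = 0 := by
    have := congr(P $hv')
    rw [map_sub, ← mul_apply, fixedProj_mul, ← mul_apply, (isIdempotentElem_fixedProj hc).eq,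
      sub_self, map_smul] at this
    exact (smul_eq_zero.1 this.symm).resolve_left hμ0
  have hfv : f v = μ • v := by rw [← hv', hPv, sub_zero]
  refine ⟨hasEigenvalue_iff_mem_spectrum.1
    (hasEigenvalue_of_hasEigenvector ⟨mem_eigenspace_iff.2 hfv, hv.2⟩), ?_⟩
  rintro rfl
  have hker : v ∈ LinearMap.ker (f - 1) := by simp [hfv]
  exact hv.2 (by rw [← Submodule.projection_apply_of_mem_left hc hker]; exact hPv)

end Module.End

namespace Matrix

variable {n : Type*} [Fintype n]

theorem mulVec_eq_self_iff_of_tendsto_pow [DecidableEq n] {R : Type*} [Semiring R]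
    [TopologicalSpace R] [IsTopologicalSemiring R] [T2Space R] {A P : Matrix n n R}
    (h : Tendsto (A ^ ·) atTop (𝓝 P)) (v : n → R) : P *ᵥ v = v ↔ A *ᵥ v = v := by
  refine ⟨fun hP => by rw [← hP, mulVec_mulVec, mul_eq_right_of_tendsto_pow h], fun hA => ?_⟩
  have hpow (k : ℕ) : (A ^ k) *ᵥ v = v := by
    induction k with
    | zero => simp
    | succ k ih => rw [pow_succ, ← mulVec_mulVec, hA, ih]
  have hlim := ((continuous_id.matrix_mulVec (continuous_const (y := v))).tendsto P).comp h
  simp only [Function.comp_def, id, hpow] at hlim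
  exact tendsto_nhds_unique hlim tendsto_const_nhds

open scoped Matrix.Norms.Operator in
theorem linfty_opNorm_le_card_mul {m α : Type*} [Fintype m] [SeminormedAddCommGroup α]
    {A : Matrix m n α} {C : ℝ} (hC : 0 ≤ C) (h : ∀ i j, ‖A i j‖ ≤ C) :
    ‖A‖ ≤ Fintype.card n * C := by
  lift C to NNReal using hC
  have : ‖A‖₊ ≤ Fintype.card n * C := by
    rw [linfty_opNNNorm_def]
    refine Finset.sup_le fun i _ => ?_
    simpa using Finset.sum_le_card_nsmul Finset.univ (fun j => ‖A i j‖₊) C fun j _ =>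
      NNReal.coe_le_coe.1 (h i j)
  exact_mod_cast this

theorem exists_tendsto_pow [DecidableEq n] {M : Matrix n n ℂ}
    (hM : ∃ C, ∀ k i j, ‖(M ^ k) i j‖ ≤ C)
    (hspec : ∀ μ ∈ spectrum ℂ M, ‖μ‖ ≤ 1 ∧ (‖μ‖ = 1 → μ = 1)) :
    ∃ Q, Tendsto (M ^ ·) atTop (𝓝 Q) := by
  open scoped Matrix.Norms.Operator in
  let e := toLinAlgEquiv' (R := ℂ) (n := n)
  have horbit (v : n → ℂ) : ∃ C, ∀ k, ‖(e M ^ k) v‖ ≤ C := by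
    obtain ⟨C, hC⟩ := hM
    refine ⟨Fintype.card n * max C 0 * ‖v‖, fun k => ?_⟩
    rw [← map_pow, toLinAlgEquiv'_apply]
    refine (linfty_opNorm_mulVec _ v).trans ?_
    gcongr
    exact linfty_opNorm_le_card_mul (le_max_right _ _) fun i j =>
      (hC k i j).trans (le_max_left _ _)
  have hc := Module.End.isCompl_ker_range_of_disjoint
    (Module.End.disjoint_ker_sub_one_range_sub_one_of_bounded (e M) horbit)
  refine ⟨e.symm (Module.End.fixedProj hc),
    tendsto_pow_atTop_nhds_of_isIdempotentElem ?_ ?_ ?_ fun z hz => ?_⟩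
  · exact e.injective (by rw [map_mul, e.apply_symm_apply, Module.End.mul_fixedProj])
  · exact e.injective (by rw [map_mul, e.apply_symm_apply, Module.End.fixedProj_mul])
  · exact (Module.End.isIdempotentElem_fixedProj hc).map e.symm
  rcases eq_or_ne z 0 with rfl | hz0
  · simp
  rw [← AlgEquiv.spectrum_eq e, map_sub, e.apply_symm_apply] at hz
  obtain ⟨hzM, hz1⟩ := Module.End.mem_spectrum_of_mem_spectrum_sub_fixedProj hc hz hz0
  rw [AlgEquiv.spectrum_eq] at hzM
  obtain ⟨hle, heq⟩ := hspec z hzM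
  exact hle.lt_of_ne fun h => hz1 (heq h)

end Matrix

/-- Let `A` be a real `m × m` matrix with uniformly bounded powers
(entrywise) whose complex eigenvalues all satisfy `|λ| ≤ 1`, with `λ = 1` the only
eigenvalue of modulus one. Then the powers `Aⁿ` converge (entrywise) to a matrix `P`
which is the projection onto the fixed-point subspace of `A`:
`P² = P`, `AP = P = PA`, and `P v = v ↔ A v = v` for every vector `v`. -/
theorem stmt10 {m : ℕ} (A : Matrix (Fin m) (Fin m) ℝ)
    (hbound : ∃ C : ℝ, ∀ (k : ℕ) (i j : Fin m), |(A ^ k) i j| ≤ C)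
    (hspec : ∀ μ ∈ spectrum ℂ (A.map (Complex.ofReal)),
      ‖μ‖ ≤ 1 ∧ (‖μ‖ = 1 → μ = 1)) :
    ∃ P : Matrix (Fin m) (Fin m) ℝ,
      (∀ i j : Fin m, Tendsto (fun k : ℕ => (A ^ k) i j) atTop (nhds (P i j))) ∧
      P * P = P ∧ A * P = P ∧ P * A = P ∧
      (∀ v : Fin m → ℝ, P.mulVec v = v ↔ A.mulVec v = v) := by
  obtain ⟨C, hC⟩ := hbound
  have hpow (k : ℕ) : (A ^ k).map ofReal = A.map ofReal ^ k := Matrix.map_pow A ofRealHom k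
  obtain ⟨Q, hQ⟩ := exists_tendsto_pow ⟨C, fun k i j => by simpa [← hpow] using hC k i j⟩ hspec
  have hP : Tendsto (A ^ ·) atTop (𝓝 (Q.map re)) := by
    simpa [Function.comp_def, ← hpow] using
      ((continuous_id.matrix_map continuous_re).tendsto Q).comp hQ
  exact ⟨Q.map re, fun i j => tendsto_pi_nhds.1 (tendsto_pi_nhds.1 hP i) j,
    isIdempotentElem_of_tendsto_pow hP, mul_eq_right_of_tendsto_pow hP,
    mul_eq_left_of_tendsto_pow hP, mulVec_eq_self_iff_of_tendsto_pow hP⟩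
end

section
/- Let 𝒜 be a real *-subalgebra of M_n(ℂ), let ω ∈ M_n(ℂ) be positive definite with ω A = A ω for every A ∈ 𝒜, and let Π be the orthogonal projection of M_n(ℂ) onto 𝒜 with respect to the real Hilbert–Schmidt inner product. Define β(B) := Π(ω^{1/2} B ω^{1/2}) for B ∈ M_n(ℂ), where ω^{1/2} is the positive definite square root of ω. Then β is a real conditional expectation onto 𝒜. Moreover, for every Hermitian X ∈ M_n(ℂ) whose orthogonal projection onto 𝒜 equals X ω⁻¹, one has Re Tr(X β(B)) = Re Tr(X B) for all B ∈ M_n(ℂ). -/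
open Matrix Complex Filter
open scoped ComplexOrder

/-- The positive semidefinite square root of a positive semidefinite matrix
(the former Mathlib `Matrix.PosSemidef.sqrt`, restated verbatim). -/
noncomputable def posSemidefSqrt {n : ℕ} {A : Mat n} (hA : A.PosSemidef) : Mat n :=
  hA.1.eigenvectorUnitary.1 * diagonal ((↑) ∘ Real.sqrt ∘ hA.1.eigenvalues) *
  (star hA.1.eigenvectorUnitary : Mat n)

/-! With `⟨A, B⟩ = Re Tr(Aᴴ B)`, the projection `P` is characterised by `P B ∈ 𝒜` and
`⟨A, P B⟩ = ⟨A, B⟩` for `A ∈ 𝒜`; hence `P` is self-adjoint, left `𝒜`-linear and preserves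
Hermitian matrices. It is also positive: a Hermitian `M ∈ 𝒜` pairing nonnegatively with every
positive element of `𝒜` is positive, because its negative part `M⁻` is a functional-calculus
image of `M`, so lies in the (closed) subalgebra `𝒜`, and `⟨M⁻, M⟩ = -⟨M⁻, M⁻⟩`.
Since `ω^{1/2}` commutes with `𝒜`, the map `β = P(ω^{1/2} · ω^{1/2})` inherits these properties.
For the trace identity, self-adjointness of `P` gives `⟨X, β B⟩ = ⟨X ω⁻¹, ω^{1/2} B ω^{1/2}⟩`,
and `(X ω⁻¹)ᴴ = ω⁻¹ X ∈ 𝒜` commutes with `ω^{1/2}` and `ω`, which turns this into `⟨X, B⟩`. -/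

open scoped MatrixOrder

section RCLike

variable {m 𝕜 : Type*} [Fintype m] [RCLike 𝕜]

lemma Matrix.re_trace_conjTranspose_mul_comm (A B : Matrix m m 𝕜) :
    RCLike.re (Aᴴ * B).trace = RCLike.re (Bᴴ * A).trace := by
  rw [← conjTranspose_conjTranspose A, ← conjTranspose_mul, trace_conjTranspose,
    conjTranspose_conjTranspose, RCLike.star_def, RCLike.conj_re]

lemma Matrix.eq_zero_of_re_trace_conjTranspose_mul_self_eq_zero {A : Matrix m m 𝕜}
    (h : RCLike.re (Aᴴ * A).trace = 0) : A = 0 := by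
  have him := (RCLike.nonneg_iff.mp (posSemidef_conjTranspose_mul_self A).trace_nonneg).2
  exact trace_conjTranspose_mul_self_eq_zero_iff.mp (RCLike.ext (by simpa using h) (by simpa))

lemma Matrix.PosSemidef.trace_mul_nonneg_s15 [DecidableEq m] {A B : Matrix m m 𝕜}
    (hA : A.PosSemidef) (hB : B.PosSemidef) : 0 ≤ (A * B).trace := by
  have hS : (CFC.sqrt A)ᴴ = CFC.sqrt A := (CFC.sqrt_nonneg A).posSemidef.1
  rw [← CFC.sqrt_mul_sqrt_self A hA.nonneg, mul_assoc, trace_mul_comm, mul_assoc]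
  simpa [hS, mul_assoc] using (hB.conjTranspose_mul_mul_same (CFC.sqrt A)).trace_nonneg

lemma Commute.matrix_sqrt_left [DecidableEq m] {A B : Matrix m m 𝕜} (h : Commute A B) :
    Commute (CFC.sqrt A) B := by
  rw [CFC.sqrt_eq_cfc]
  exact h.cfc_nnreal _

end RCLike

lemma posSemidefSqrt_eq_sqrt {n : ℕ} {A : Mat n} (hA : A.PosSemidef) :
    posSemidefSqrt hA = CFC.sqrt A := by
  rw [CFC.sqrt_eq_cfc, cfc_nnreal_eq_real _ A, hA.1.cfc_eq, IsHermitian.cfc,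
    Unitary.conjStarAlgAut_apply]
  simp [posSemidefSqrt, Function.comp_def, hA.eigenvalues_nonneg]

namespace IsRealStarSubalgebra

variable {n : ℕ} {𝒜 : Set (Mat n)}

def toStarSubalgebra_s15 (h𝒜 : IsRealStarSubalgebra 𝒜) : StarSubalgebra ℝ (Mat n) where
  carrier := 𝒜
  add_mem' ha hb := h𝒜.1 _ ha _ hb
  mul_mem' ha hb := h𝒜.2.2.1 _ ha _ hb
  algebraMap_mem' r := by
    rw [Algebra.algebraMap_eq_smul_one]
    exact h𝒜.2.1 r _ h𝒜.2.2.2.2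
  star_mem' ha := h𝒜.2.2.2.1 _ ha

lemma isClosed (h𝒜 : IsRealStarSubalgebra 𝒜) : IsClosed 𝒜 :=
  Submodule.closed_of_finiteDimensional (Subalgebra.toSubmodule h𝒜.toStarSubalgebra_s15.toSubalgebra)

lemma mul_mem (h𝒜 : IsRealStarSubalgebra 𝒜) {A B : Mat n} (hA : A ∈ 𝒜) (hB : B ∈ 𝒜) :
    A * B ∈ 𝒜 :=
  h𝒜.2.2.1 A hA B hB

lemma conjTranspose_mem (h𝒜 : IsRealStarSubalgebra 𝒜) {A : Mat n} (hA : A ∈ 𝒜) : Aᴴ ∈ 𝒜 :=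
  h𝒜.2.2.2.1 A hA

lemma sub_mem (h𝒜 : IsRealStarSubalgebra 𝒜) {A B : Mat n} (hA : A ∈ 𝒜) (hB : B ∈ 𝒜) :
    A - B ∈ 𝒜 :=
  _root_.sub_mem (x := A) (y := B) (H := h𝒜.toStarSubalgebra_s15) hA hB

lemma negPart_mem (h𝒜 : IsRealStarSubalgebra 𝒜) {M : Mat n} (hM : M ∈ 𝒜) : M⁻ ∈ 𝒜 :=
  cfcₙ_mem (s := h𝒜.toStarSubalgebra_s15) (hs := h𝒜.isClosed) _ hM

lemma posSemidef_of_forall_re_trace_mul_nonneg (h𝒜 : IsRealStarSubalgebra 𝒜) {M : Mat n}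
    (hM𝒜 : M ∈ 𝒜) (hM : M.IsHermitian)
    (h : ∀ D ∈ 𝒜, D.PosSemidef → 0 ≤ (M * D).trace.re) : M.PosSemidef := by
  set N := M⁻
  have hN : N.PosSemidef := (CFC.negPart_nonneg M).posSemidef
  have hMN : M * N = -(Nᴴ * N) := by
    conv_lhs => rw [← CFC.posPart_sub_negPart M hM.isSelfAdjoint]
    rw [sub_mul, CFC.posPart_mul_negPart, zero_sub, hN.1.eq]
  have hNN : (Nᴴ * N).trace.re = 0 := by
    have h₁ := h N (h𝒜.negPart_mem hM𝒜) hN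
    have h₂ := (Complex.nonneg_iff.mp (posSemidef_conjTranspose_mul_self N).trace_nonneg).1
    rw [hMN, trace_neg, Complex.neg_re] at h₁
    linarith
  rw [← nonneg_iff_posSemidef, ← CFC.negPart_eq_zero_iff M hM.isSelfAdjoint]
  exact eq_zero_of_re_trace_conjTranspose_mul_self_eq_zero hNN

end IsRealStarSubalgebra

structure IsOrthogonalProjection_s15 {n : ℕ} (𝒜 : Set (Mat n)) (P : Mat n →ₗ[ℝ] Mat n) : Prop where
  mem : ∀ B : Mat n, P B ∈ 𝒜
  re_trace_mul_sub_eq_zero : ∀ A ∈ 𝒜, ∀ B : Mat n, ((Aᴴ * (B - P B)).trace).re = 0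

namespace IsOrthogonalProjection_s15

variable {n : ℕ} {𝒜 : Set (Mat n)} {P : Mat n →ₗ[ℝ] Mat n} (hP : IsOrthogonalProjection_s15 𝒜 P)
include hP

lemma re_trace_mul_apply {A : Mat n} (hA : A ∈ 𝒜) (B : Mat n) :
    (Aᴴ * P B).trace.re = (Aᴴ * B).trace.re := by
  have h := hP.re_trace_mul_sub_eq_zero A hA B
  rw [mul_sub, trace_sub, Complex.sub_re, sub_eq_zero] at h
  exact h.symm

lemma re_trace_conjTranspose_mul_apply (X C : Mat n) :
    (Xᴴ * P C).trace.re = ((P X)ᴴ * C).trace.re :=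
  calc (Xᴴ * P C).trace.re = ((P C)ᴴ * X).trace.re := re_trace_conjTranspose_mul_comm X (P C)
    _ = ((P C)ᴴ * P X).trace.re := (hP.re_trace_mul_apply (hP.mem C) X).symm
    _ = ((P X)ᴴ * P C).trace.re := re_trace_conjTranspose_mul_comm (P C) (P X)
    _ = ((P X)ᴴ * C).trace.re := hP.re_trace_mul_apply (hP.mem X) C

variable (h𝒜 : IsRealStarSubalgebra 𝒜)
include h𝒜

lemma apply_eq_of_forall_re_trace_eq {B E : Mat n} (hE : E ∈ 𝒜)
    (h : ∀ A ∈ 𝒜, (Aᴴ * E).trace.re = (Aᴴ * B).trace.re) : P B = E := by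
  have hD := h𝒜.sub_mem (hP.mem B) hE
  refine sub_eq_zero.mp (eq_zero_of_re_trace_conjTranspose_mul_self_eq_zero ?_)
  rw [RCLike.re_to_complex, mul_sub, trace_sub, Complex.sub_re, hP.re_trace_mul_apply hD,
    h _ hD, sub_self]

lemma map_mul_left {A : Mat n} (hA : A ∈ 𝒜) (C : Mat n) : P (A * C) = A * P C := by
  refine hP.apply_eq_of_forall_re_trace_eq h𝒜 (h𝒜.mul_mem hA (hP.mem C)) fun D hD => ?_
  simpa only [conjTranspose_mul, conjTranspose_conjTranspose, mul_assoc] using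
    hP.re_trace_mul_apply (h𝒜.mul_mem (h𝒜.conjTranspose_mem hA) hD) C

lemma isHermitian_apply {C : Mat n} (hC : C.IsHermitian) : (P C).IsHermitian := by
  refine (hP.apply_eq_of_forall_re_trace_eq h𝒜 (h𝒜.conjTranspose_mem (hP.mem C))
    fun A hA => ?_).symm
  calc (Aᴴ * (P C)ᴴ).trace.re = (P C * A).trace.re := by
        simpa using re_trace_conjTranspose_mul_comm A (P C)ᴴ
    _ = (Aᴴᴴ * P C).trace.re := by rw [trace_mul_comm, conjTranspose_conjTranspose]
    _ = (Aᴴᴴ * C).trace.re := hP.re_trace_mul_apply (h𝒜.conjTranspose_mem hA) C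
    _ = (Cᴴ * A).trace.re := by rw [hC.eq, trace_mul_comm, conjTranspose_conjTranspose]
    _ = (Aᴴ * C).trace.re := re_trace_conjTranspose_mul_comm C A

lemma posSemidef_apply {B : Mat n} (hB : B.PosSemidef) : (P B).PosSemidef := by
  refine h𝒜.posSemidef_of_forall_re_trace_mul_nonneg (hP.mem B)
    (hP.isHermitian_apply h𝒜 hB.1) fun D hD hDpsd => ?_
  calc 0 ≤ (D * B).trace.re := (Complex.nonneg_iff.mp (hDpsd.trace_mul_nonneg_s15 hB)).1
    _ = (Dᴴ * P B).trace.re := by rw [hP.re_trace_mul_apply hD, hDpsd.1.eq]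
    _ = (P B * D).trace.re := by rw [hDpsd.1.eq, trace_mul_comm]

end IsOrthogonalProjection_s15

/-- Let `𝒜` be a real `*`-subalgebra, `ω` positive definite commuting with
every element of `𝒜`, and `P` the orthogonal projection onto `𝒜` (w.r.t. the real
Hilbert–Schmidt inner product). Then `β(B) := P(ω^{1/2} B ω^{1/2})` is a real conditional
expectation onto `𝒜`; and for every Hermitian `X` whose orthogonal projection onto `𝒜`
equals `X ω⁻¹`, one has `Re Tr(X β(B)) = Re Tr(X B)` for all `B`. -/
theorem stmt15 {n : ℕ} (𝒜 : Set (Mat n)) (h𝒜 : IsRealStarSubalgebra 𝒜)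
    (ω : Mat n) (hω : ω.PosDef) (hcomm : ∀ A ∈ 𝒜, ω * A = A * ω)
    (P : Mat n →ₗ[ℝ] Mat n)
    (hPmem : ∀ B : Mat n, P B ∈ 𝒜)
    (hPorth : ∀ A ∈ 𝒜, ∀ B : Mat n, ((Aᴴ * (B - P B)).trace).re = 0) :
    (∀ B : Mat n, B.PosSemidef →
      (P ((posSemidefSqrt hω.posSemidef) * B * (posSemidefSqrt hω.posSemidef))).PosSemidef) ∧
    (∀ B : Mat n, P ((posSemidefSqrt hω.posSemidef) * B * (posSemidefSqrt hω.posSemidef)) ∈ 𝒜) ∧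
    (∀ A ∈ 𝒜, ∀ B : Mat n,
      P ((posSemidefSqrt hω.posSemidef) * (A * B) * (posSemidefSqrt hω.posSemidef)) =
        A * P ((posSemidefSqrt hω.posSemidef) * B * (posSemidefSqrt hω.posSemidef))) ∧
    (∀ X : Mat n, X.IsHermitian → P X = X * ω⁻¹ →
      ∀ B : Mat n,
        ((X * P ((posSemidefSqrt hω.posSemidef) * B * (posSemidefSqrt hω.posSemidef))).trace).re =
          ((X * B).trace).re) := by
  have hP : IsOrthogonalProjection_s15 𝒜 P := ⟨hPmem, hPorth⟩
  rw [posSemidefSqrt_eq_sqrt]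
  set S := CFC.sqrt ω
  have hSS : S * S = ω := CFC.sqrt_mul_sqrt_self ω hω.posSemidef.nonneg
  have hSh : Sᴴ = S := (CFC.sqrt_nonneg ω).posSemidef.1
  have hScomm (A : Mat n) (hA : A ∈ 𝒜) : S * A = A * S :=
    Commute.matrix_sqrt_left (hcomm A hA)
  refine ⟨fun B hB => hP.posSemidef_apply h𝒜 ?_, fun B => hP.mem _, fun A hA B => ?_,
    fun X hX hPX B => ?_⟩
  · simpa only [hSh] using hB.mul_mul_conjTranspose_same S
  · rw [show S * (A * B) * S = A * (S * B * S) by simp only [← mul_assoc, hScomm A hA],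
      hP.map_mul_left h𝒜 hA]
  · have hY : (X * ω⁻¹)ᴴ ∈ 𝒜 := h𝒜.conjTranspose_mem (hPX ▸ hP.mem X)
    have hωY : ω * (X * ω⁻¹)ᴴ = X := by
      rw [conjTranspose_mul, conjTranspose_nonsing_inv, hω.1.eq, hX.eq,
        mul_nonsing_inv_cancel_left _ _ ((isUnit_iff_isUnit_det ω).mp hω.isUnit)]
    calc (X * P (S * B * S)).trace.re = ((P X)ᴴ * (S * B * S)).trace.re := by
          rw [← hP.re_trace_conjTranspose_mul_apply, hX.eq]
      _ = (S * (X * ω⁻¹)ᴴ * S * B).trace.re := by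
          rw [hPX, ← mul_assoc, trace_mul_comm]
          simp only [mul_assoc]
      _ = (X * B).trace.re := by rw [hScomm _ hY, mul_assoc _ S S, hSS, ← hcomm _ hY, hωY]
end

section
/- Let ρ ∈ M_n(ℂ) be positive definite and let 𝒜 be a real *-subalgebra of M_n(ℂ). Then the following are equivalent: (i) ρ A ρ⁻¹ ∈ 𝒜 for every A ∈ 𝒜 (ρ-modular invariance); (ii) for every A ∈ 𝒜, the unique matrix W ∈ M_n(ℂ) satisfying the Sylvester equation ρ W + W ρ = ρ A − A ρ belongs to 𝒜 (invariance under the map D̃_ρ = (L_ρ − R_ρ)/(L_ρ + R_ρ)). Equivalently for (ii): for every A ∈ 𝒜 and every W ∈ M_n(ℂ), if ρ W + W ρ = ρ A − A ρ, then W ∈ 𝒜. -/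
open Matrix Complex Filter
open scoped ComplexOrder

lemma sylvester_inj {n : ℕ} (ρ : Mat n) (hρ : ρ.PosDef) (W : Mat n)
    (h : ρ * W + W * ρ = 0) : W = 0 := by
  have hH := hρ.1
  set U : Mat n := (hH.eigenvectorUnitary : Mat n) with hU
  have hUU : star U * U = 1 := Unitary.coe_star_mul_self hH.eigenvectorUnitary
  have hUU' : U * star U = 1 := Unitary.coe_mul_star_self hH.eigenvectorUnitary
  set D : Mat n := Matrix.diagonal (RCLike.ofReal ∘ hH.eigenvalues) with hD
  have hspec : ρ = U * D * star U := hH.spectral_theorem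
  set X : Mat n := star U * W * U with hX
  have h1 : star U * ρ = D * star U := by
    rw [hspec, ← Matrix.mul_assoc, ← Matrix.mul_assoc, hUU, Matrix.one_mul]
  have h2 : ρ * U = U * D := by
    rw [hspec, Matrix.mul_assoc, hUU, Matrix.mul_one]
  have key : D * X + X * D = 0 := by
    calc D * X + X * D
        = (D * star U) * (W * U) + (star U * W) * (ρ * U) := by
          rw [h2, hX]; simp only [Matrix.mul_assoc]
      _ = (star U * ρ) * (W * U) + (star U * W) * (ρ * U) := by rw [h1]
      _ = star U * ((ρ * W + W * ρ) * U) := by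
          simp only [Matrix.mul_add, Matrix.add_mul, Matrix.mul_assoc]
      _ = 0 := by rw [h]; simp
  have hX0 : X = 0 := by
    ext i j
    have hij := congrFun (congrFun key i) j
    simp only [Matrix.add_apply, Matrix.zero_apply, hD, Matrix.diagonal_mul, Matrix.mul_diagonal,
      Function.comp] at hij
    rw [mul_comm (X i j), ← add_mul] at hij
    have hpos : (0:ℝ) < hH.eigenvalues i + hH.eigenvalues j :=
      add_pos (hρ.eigenvalues_pos i) (hρ.eigenvalues_pos j)
    rcases mul_eq_zero.mp hij with h' | h'
    · rw [← RCLike.ofReal_add, RCLike.ofReal_eq_zero] at h'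
      exact absurd h' hpos.ne'
    · exact h'
  have hWU : U * X * star U = W := by
    rw [hX]
    calc U * (star U * W * U) * star U = (U * star U) * W * (U * star U) := by
          simp only [Matrix.mul_assoc]
      _ = W := by rw [hUU']; simp
  rw [← hWU, hX0]; simp

/-- For a positive definite `ρ` and a real `*`-subalgebra `𝒜`, the
following are equivalent: (i) `ρ A ρ⁻¹ ∈ 𝒜` for every `A ∈ 𝒜` (ρ-modular invariance);
(ii) for every `A ∈ 𝒜`, the unique solution `W` of the Sylvester equation
`ρ W + W ρ = ρ A − A ρ` belongs to `𝒜` (invariance under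
`D̃_ρ = (L_ρ − R_ρ)/(L_ρ + R_ρ)`). -/
theorem stmt19 {n : ℕ} (ρ : Mat n) (hρ : ρ.PosDef)
    (𝒜 : Set (Mat n)) (h𝒜 : IsRealStarSubalgebra 𝒜) :
    (∀ A ∈ 𝒜, ρ * A * ρ⁻¹ ∈ 𝒜) ↔
    (∀ A ∈ 𝒜, ∀ W : Mat n, ρ * W + W * ρ = ρ * A - A * ρ → W ∈ 𝒜) := by
  obtain ⟨hadd, hsmul, hmul, hstar, hone⟩ := h𝒜
  have h0 : (0 : Mat n) ∈ 𝒜 := by simpa using hsmul 0 1 hone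
  have hdet : IsUnit ρ.det := hρ.det_pos.ne'.isUnit
  have hinv : ρ⁻¹ * ρ = 1 := Matrix.nonsing_inv_mul ρ hdet
  have hinv' : ρ * ρ⁻¹ = 1 := Matrix.mul_nonsing_inv ρ hdet
  -- 𝒜 as a submodule
  let S : Submodule ℝ (Mat n) :=
    { carrier := 𝒜
      add_mem' := fun {a b} ha hb => hadd a ha b hb
      zero_mem' := h0
      smul_mem' := fun r a ha => hsmul r a ha }
  have hSmem : ∀ {x : Mat n}, x ∈ S ↔ x ∈ 𝒜 := Iff.rfl
  -- uniqueness of Sylvester solutions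
  have uniq : ∀ W W' : Mat n, ρ * W + W * ρ = ρ * W' + W' * ρ → W = W' := by
    intro W W' hWW
    have : ρ * (W - W') + (W - W') * ρ = 0 := by
      simp only [Matrix.mul_sub, Matrix.sub_mul]
      rw [sub_add_sub_comm, hWW, sub_self]
    have := sylvester_inj ρ hρ _ this
    exact sub_eq_zero.mp this
  constructor
  · -- (i) → (ii)
    intro hi A hA W hW
    -- the map X ↦ ρ X ρ⁻¹ + X on S
    let Φ : S →ₗ[ℝ] S :=
      { toFun := fun X => ⟨ρ * X * ρ⁻¹ + (X : Mat n),
          hadd _ (hi _ X.2) _ X.2⟩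
        map_add' := by
          intro x y
          ext1
          simp only [Submodule.coe_add, AddSubmonoid.coe_add]
          simp only [Matrix.mul_add, Matrix.add_mul]
          abel
        map_smul' := by
          intro r x
          ext1
          simp only [SetLike.val_smul, RingHom.id_apply]
          rw [Matrix.mul_smul, Matrix.smul_mul, smul_add] }
    have hΦinj : Function.Injective Φ := by
      rw [injective_iff_map_eq_zero]
      intro x hx
      have hx0 : ρ * (x : Mat n) * ρ⁻¹ + (x : Mat n) = 0 := congrArg Subtype.val hx
      have : ρ * (x : Mat n) + (x : Mat n) * ρ = 0 := by
        have := congrArg (fun M => M * ρ) hx0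
        simpa [Matrix.add_mul, Matrix.mul_assoc, hinv] using this
      ext1
      exact sylvester_inj ρ hρ _ this
    have hΦsurj : Function.Surjective Φ :=
      LinearMap.surjective_of_injective hΦinj
    -- C = ρ A ρ⁻¹ - A ∈ S
    have hC : ρ * A * ρ⁻¹ - A ∈ S := S.sub_mem (hi A hA) hA
    obtain ⟨X, hX⟩ := hΦsurj ⟨_, hC⟩
    have hXval : ρ * (X : Mat n) * ρ⁻¹ + (X : Mat n) = ρ * A * ρ⁻¹ - A :=
      congrArg Subtype.val hX
    have hXsyl : ρ * (X : Mat n) + (X : Mat n) * ρ = ρ * A - A * ρ := by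
      have := congrArg (fun M => M * ρ) hXval
      simpa [Matrix.add_mul, Matrix.sub_mul, Matrix.mul_assoc, hinv] using this
    have : W = (X : Mat n) := uniq _ _ (by rw [hW, hXsyl])
    rw [this]; exact X.2
  · -- (ii) → (i)
    intro hii A hA
    -- T W = ρ W + W ρ is a bijective linear map
    let T : Mat n →ₗ[ℝ] Mat n :=
      { toFun := fun X => ρ * X + X * ρ
        map_add' := by intro x y; simp only [Matrix.mul_add, Matrix.add_mul]; abel
        map_smul' := by
          intro r x
          simp only [RingHom.id_apply]
          rw [Matrix.mul_smul, Matrix.smul_mul, smul_add] }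
    have hTinj : Function.Injective T := by
      rw [injective_iff_map_eq_zero]
      intro x hx
      exact sylvester_inj ρ hρ x hx
    have hTsurj : Function.Surjective T := LinearMap.surjective_of_injective hTinj
    let e : Mat n ≃ₗ[ℝ] Mat n := LinearEquiv.ofBijective T ⟨hTinj, hTsurj⟩
    -- Dl X = solution of Sylvester equation for commutator
    let Cm : Mat n →ₗ[ℝ] Mat n :=
      { toFun := fun X => ρ * X - X * ρ
        map_add' := by intro x y; simp only [Matrix.mul_add, Matrix.add_mul]; abel
        map_smul' := by
          intro r x
          simp only [RingHom.id_apply]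
          rw [Matrix.mul_smul, Matrix.smul_mul, smul_sub] }
    let Dl : Mat n →ₗ[ℝ] Mat n := (e.symm : Mat n →ₗ[ℝ] Mat n) ∘ₗ Cm
    have hDl : ∀ X : Mat n, ρ * (Dl X) + (Dl X) * ρ = ρ * X - X * ρ := by
      intro X
      have : T (e.symm (Cm X)) = Cm X := e.apply_symm_apply (Cm X)
      exact this
    have hDlmem : ∀ X ∈ 𝒜, Dl X ∈ 𝒜 := fun X hX => hii X hX (Dl X) (hDl X)
    -- Ψ X = X - Dl X on S
    let Ψ : S →ₗ[ℝ] S :=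
      { toFun := fun X => ⟨(X : Mat n) - Dl X,
          S.sub_mem X.2 (hDlmem _ X.2)⟩
        map_add' := by
          intro x y
          ext1
          simp only [Submodule.coe_add, map_add]
          abel
        map_smul' := by
          intro r x
          ext1
          simp only [SetLike.val_smul, RingHom.id_apply]
          rw [Dl.map_smul, smul_sub] }
    have hΨinj : Function.Injective Ψ := by
      rw [injective_iff_map_eq_zero]
      intro x hx
      have hx0 : (x : Mat n) - Dl (x : Mat n) = 0 := congrArg Subtype.val hx
      have hxD : (x : Mat n) = Dl (x : Mat n) := sub_eq_zero.mp hx0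
      have h1 : ρ * (x : Mat n) + (x : Mat n) * ρ = ρ * (x : Mat n) - (x : Mat n) * ρ := by
        conv_lhs => rw [hxD]
        exact hDl _
      have hb : (x : Mat n) * ρ = -((x : Mat n) * ρ) := by
        rw [sub_eq_add_neg] at h1
        exact add_left_cancel h1
      have h2 : (x : Mat n) * ρ = 0 := by
        ext i j
        have h3 : ((x : Mat n) * ρ) i j = -(((x : Mat n) * ρ) i j) := by
          have := congrFun (congrFun hb i) j
          simpa [Matrix.neg_apply] using this
        have h4 : ((x : Mat n) * ρ) i j + ((x : Mat n) * ρ) i j = 0 := by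
          nth_rewrite 2 [h3]; ring
        simpa using add_self_eq_zero.mp h4
      have : (x : Mat n) = 0 := by
        have := congrArg (fun M => M * ρ⁻¹) h2
        simpa [Matrix.mul_assoc, hinv'] using this
      exact Subtype.ext this
    have hΨsurj : Function.Surjective Ψ := LinearMap.surjective_of_injective hΨinj
    obtain ⟨B, hB⟩ := hΨsurj ⟨A, hA⟩
    have hBval : (B : Mat n) - Dl B = A := congrArg Subtype.val hB
    have hBsyl := hDl (B : Mat n)
    -- ρ A ρ⁻¹ = B + Dl B
    have key : ρ * A * ρ⁻¹ = (B : Mat n) + Dl B := by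
      have h1 : ρ * A = ((B : Mat n) + Dl B) * ρ := by
        rw [← hBval, Matrix.mul_sub, Matrix.add_mul]
        have hW : ρ * Dl B = ρ * (B : Mat n) - (B : Mat n) * ρ - (Dl B) * ρ := by
          rw [← hBsyl]; abel
        rw [hW]; abel
      rw [h1, Matrix.mul_assoc, hinv', Matrix.mul_one]
    rw [key]
    exact hadd _ B.2 _ (hDlmem _ B.2)
end
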